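/- arXiv:2404.12116 — 2 statements merged into one kernel-verified Lean document; each statement's English description precedes it below -/
import Mathlib

section
/- Let R be a nonzero ring and let 'C_R^{le} be the set of all left regular elements c of R such that Rc is an essential left ideal of R. Then 'C_R^{le} is a multiplicative set of R: it contains 1, does not contain 0, and is closed under multiplication. In particular, if s and t are left regular elements of R such that Rs and Rt are essential left ideals, then st is left regular and R·st is an essential left ideal of R. -/
/-!
Right multiplication by a left regular `t` is an injective endomorphism of the left module `R`
with essential image `Rt`. Such a map carries essential submodules to essential submodules, and
it carries `Rs` onto `Rst`.
-/

/-- The set `'C_R^{le}` of left regular elements `c` of `R` such that the left ideal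
`Rc = span R {c}` is an essential left ideal of `R`. -/
def leftRegEss (R : Type*) [Ring R] : Set R :=
  {c : R | (∀ r : R, r * c = 0 → r = 0) ∧
    ∀ J : Submodule R R, J ≠ ⊥ → Submodule.span R {c} ⊓ J ≠ ⊥}

namespace Submodule

variable {R M N : Type*} [Ring R] [AddCommGroup M] [Module R M] [AddCommGroup N] [Module R N]

def IsEssential (L : Submodule R M) : Prop :=
  ∀ K : Submodule R M, K ≠ ⊥ → L ⊓ K ≠ ⊥

theorem comap_ne_bot_of_range_inf_ne_bot (f : M →ₗ[R] N) {J : Submodule R N}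
    (h : LinearMap.range f ⊓ J ≠ ⊥) : J.comap f ≠ ⊥ := by
  obtain ⟨y, hy, hy0⟩ := (Submodule.ne_bot_iff _).1 h
  obtain ⟨⟨x, rfl⟩, hxJ⟩ := mem_inf.1 hy
  exact (Submodule.ne_bot_iff _).2 ⟨x, hxJ, fun hx => hy0 (by rw [hx, map_zero])⟩

theorem IsEssential.map {L : Submodule R M} (hL : L.IsEssential) {f : M →ₗ[R] N}
    (hf : Function.Injective f) (hrange : (LinearMap.range f).IsEssential) :
    (L.map f).IsEssential := by
  intro J hJ
  have hpull : L ⊓ J.comap f ≠ ⊥ :=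
    hL _ (comap_ne_bot_of_range_inf_ne_bot f (hrange J hJ))
  have hpush : (L ⊓ J.comap f).map f ≠ ⊥ :=
    (map_injective_of_injective hf).ne_iff' (map_bot f) |>.2 hpull
  exact ne_bot_of_le_ne_bot hpush (map_inf_le f |>.trans (inf_le_inf_left _ (map_comap_le f J)))

end Submodule

section

variable {R : Type*} [Ring R]

theorem isEssential_span_singleton_mul {s t : R} (hs : (Submodule.span R {s}).IsEssential)
    (ht : (Submodule.span R {t}).IsEssential) (ht_reg : ∀ r : R, r * t = 0 → r = 0) :
    (Submodule.span R {s * t}).IsEssential := by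
  let f := LinearMap.toSpanSingleton R R t
  have hf : Function.Injective f := (injective_iff_map_eq_zero f).2 ht_reg
  have hmap : (Submodule.span R {s}).map f = Submodule.span R {s * t} := by
    rw [Submodule.map_span, Set.image_singleton, LinearMap.toSpanSingleton_apply, smul_eq_mul]
  rw [← hmap]
  refine hs.map hf ?_
  rwa [← LinearMap.span_singleton_eq_range]

theorem one_mem_leftRegEss : (1 : R) ∈ leftRegEss R := by
  refine ⟨fun r hr => by rwa [mul_one] at hr, fun J hJ => ?_⟩
  rwa [show Submodule.span R {(1 : R)} = ⊤ from Ideal.span_singleton_one, top_inf_eq]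

theorem zero_notMem_leftRegEss [Nontrivial R] : (0 : R) ∉ leftRegEss R :=
  fun h => one_ne_zero (h.1 1 (mul_zero 1))

theorem mul_mem_leftRegEss {s t : R} (hs : s ∈ leftRegEss R) (ht : t ∈ leftRegEss R) :
    s * t ∈ leftRegEss R :=
  ⟨fun r hr => hs.1 r (ht.1 _ (by rwa [mul_assoc])),
    isEssential_span_singleton_mul hs.2 ht.2 ht.1⟩

end

/-- For a nonzero ring `R`, the set `'C_R^{le}` is a multiplicative
set: it contains `1`, does not contain `0`, and is closed under multiplication. -/
theorem stmt4 {R : Type*} [Ring R] [Nontrivial R] :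
    (1 : R) ∈ leftRegEss R ∧ (0 : R) ∉ leftRegEss R ∧
    ∀ s ∈ leftRegEss R, ∀ t ∈ leftRegEss R, s * t ∈ leftRegEss R :=
  ⟨one_mem_leftRegEss, zero_notMem_leftRegEss, fun _ hs _ ht => mul_mem_leftRegEss hs ht⟩
end

section
/- Let R be a ring and let S be a left denominator set of R with ass_l(S) = a. Then the set S + a := {s + x | s ∈ S, x ∈ a} is a left denominator set of R with ass_l(S + a) = a. -/
/-!
Every `t = s + y` with `s ∈ S`, `y ∈ assₗ(S)` is dominated by `S`: if `p ∈ S` kills `y`, then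
`p * t = p * s ∈ S`. This single observation transfers `0 ∉ S`, the Ore condition and the
annihilator `assₗ(S)` from `S` to `S + assₗ(S)`. Closure under products and the denominator
condition use that `assₗ(S)` is a two-sided ideal, the left ideal property coming from the Ore
condition.
-/

section

variable {R : Type*} [Ring R]

def leftAss (S : Set R) : Set R := {r | ∃ s ∈ S, s * r = 0}

def addLeftAss (S : Set R) : Set R := {x | ∃ s ∈ S, ∃ y ∈ leftAss S, x = s + y}

section leftAss

variable {S : Set R} {x y : R}

theorem leftAss_mono {T : Set R} (hST : S ⊆ T) : leftAss S ⊆ leftAss T :=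
  fun _ ⟨s, hs, h⟩ => ⟨s, hST hs, h⟩

theorem zero_mem_leftAss (hone : (1 : R) ∈ S) : (0 : R) ∈ leftAss S :=
  ⟨1, hone, mul_zero 1⟩

theorem mul_mem_leftAss_right (hx : x ∈ leftAss S) (r : R) : x * r ∈ leftAss S := by
  obtain ⟨s, hs, h⟩ := hx
  exact ⟨s, hs, by rw [← mul_assoc, h, zero_mul]⟩

theorem mul_mem_leftAss_left (hOre : ∀ r : R, ∀ s ∈ S, ∃ s' ∈ S, ∃ r' : R, s' * r = r' * s)
    (hx : x ∈ leftAss S) (r : R) : r * x ∈ leftAss S := by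
  obtain ⟨s, hs, h⟩ := hx
  obtain ⟨s', hs', r', he⟩ := hOre r s hs
  exact ⟨s', hs', by rw [← mul_assoc, he, mul_assoc, h, mul_zero]⟩

theorem add_mem_leftAss (hmul : ∀ a ∈ S, ∀ b ∈ S, a * b ∈ S)
    (hOre : ∀ r : R, ∀ s ∈ S, ∃ s' ∈ S, ∃ r' : R, s' * r = r' * s)
    (hx : x ∈ leftAss S) (hy : y ∈ leftAss S) : x + y ∈ leftAss S := by
  obtain ⟨s, hs, hsx⟩ := hx
  obtain ⟨t, ht, hty⟩ := hy
  obtain ⟨t', ht', r', he⟩ := hOre t s hs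
  refine ⟨t' * t, hmul t' ht' t ht, ?_⟩
  have hx' : t' * t * x = 0 := by rw [he, mul_assoc, hsx, mul_zero]
  rw [mul_add, hx', mul_assoc, hty, mul_zero, add_zero]

end leftAss

section dominated

variable {S T : Set R}

theorem zero_notMem_of_forall_exists_mul_mem (hzero : (0 : R) ∉ S)
    (hdom : ∀ t ∈ T, ∃ p ∈ S, p * t ∈ S) : (0 : R) ∉ T := fun h0 => by
  obtain ⟨p, -, hp⟩ := hdom 0 h0
  exact hzero (mul_zero p ▸ hp)

theorem ore_of_forall_exists_mul_mem
    (hOre : ∀ r : R, ∀ s ∈ S, ∃ s' ∈ S, ∃ r' : R, s' * r = r' * s) (hST : S ⊆ T)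
    (hdom : ∀ t ∈ T, ∃ p ∈ S, p * t ∈ S) :
    ∀ r : R, ∀ t ∈ T, ∃ t' ∈ T, ∃ r' : R, t' * r = r' * t := by
  intro r t ht
  obtain ⟨p, -, hpt⟩ := hdom t ht
  obtain ⟨s', hs', r', he⟩ := hOre r (p * t) hpt
  exact ⟨s', hST hs', r' * p, by rw [he, mul_assoc]⟩

theorem leftAss_subset_of_forall_exists_mul_mem (hdom : ∀ t ∈ T, ∃ p ∈ S, p * t ∈ S) :
    leftAss T ⊆ leftAss S := by
  rintro r ⟨t, ht, htr⟩
  obtain ⟨p, -, hpt⟩ := hdom t ht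
  exact ⟨p * t, hpt, by rw [mul_assoc, htr, mul_zero]⟩

end dominated

section addLeftAss

variable {S : Set R}

theorem subset_addLeftAss (hone : (1 : R) ∈ S) : S ⊆ addLeftAss S :=
  fun s hs => ⟨s, hs, 0, zero_mem_leftAss hone, (add_zero s).symm⟩

theorem exists_mul_mem_of_mem_addLeftAss (hmul : ∀ a ∈ S, ∀ b ∈ S, a * b ∈ S) {t : R}
    (ht : t ∈ addLeftAss S) : ∃ p ∈ S, p * t ∈ S := by
  obtain ⟨s, hs, y, ⟨p, hp, hpy⟩, rfl⟩ := ht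
  exact ⟨p, hp, by rw [mul_add, hpy, add_zero]; exact hmul p hp s hs⟩

theorem mul_mem_addLeftAss (hmul : ∀ a ∈ S, ∀ b ∈ S, a * b ∈ S)
    (hOre : ∀ r : R, ∀ s ∈ S, ∃ s' ∈ S, ∃ r' : R, s' * r = r' * s) :
    ∀ u ∈ addLeftAss S, ∀ v ∈ addLeftAss S, u * v ∈ addLeftAss S := by
  rintro _ ⟨s, hs, y, hy, rfl⟩ _ ⟨t, ht, z, hz, rfl⟩
  have hrest : s * z + (y * t + y * z) ∈ leftAss S :=
    add_mem_leftAss hmul hOre (mul_mem_leftAss_left hOre hz s)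
      (add_mem_leftAss hmul hOre (mul_mem_leftAss_right hy t) (mul_mem_leftAss_right hy z))
  exact ⟨s * t, hmul s hs t ht, _, hrest, by noncomm_ring⟩

theorem exists_mul_eq_zero_of_mul_addLeftAss_eq_zero (hone : (1 : R) ∈ S)
    (hmul : ∀ a ∈ S, ∀ b ∈ S, a * b ∈ S)
    (hOre : ∀ r : R, ∀ s ∈ S, ∃ s' ∈ S, ∃ r' : R, s' * r = r' * s)
    (hden : ∀ r : R, ∀ s ∈ S, r * s = 0 → ∃ t ∈ S, t * r = 0) :
    ∀ r : R, ∀ t ∈ addLeftAss S, r * t = 0 → ∃ t' ∈ addLeftAss S, t' * r = 0 := by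
  rintro r _ ⟨s, hs, y, hy, rfl⟩ h
  have hrs : r * s = -r * y := by
    rw [neg_mul, eq_neg_iff_add_eq_zero, ← mul_add, h]
  obtain ⟨w, hw, hwrs⟩ : r * s ∈ leftAss S := hrs ▸ mul_mem_leftAss_left hOre hy (-r)
  obtain ⟨t', ht', ht'wr⟩ := hden (w * r) s hs (by rw [mul_assoc, hwrs])
  exact ⟨t' * w, subset_addLeftAss hone (hmul t' ht' w hw), by rw [mul_assoc, ht'wr]⟩

end addLeftAss

end

/-- Let `S` be a left denominator set of a ring `R` with
`a = assₗ(S) := {r | s * r = 0 for some s ∈ S}`.  Then `S + a` is a left denominator set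
of `R` with `assₗ(S + a) = a`. -/
theorem stmt14 {R : Type*} [Ring R] (S : Set R)
    (hone : (1 : R) ∈ S) (hmul : ∀ a ∈ S, ∀ b ∈ S, a * b ∈ S) (hzero : (0 : R) ∉ S)
    (hOre : ∀ r : R, ∀ s ∈ S, ∃ s' ∈ S, ∃ r' : R, s' * r = r' * s)
    (hden : ∀ r : R, ∀ s ∈ S, r * s = 0 → ∃ t ∈ S, t * r = 0)
    (a : Set R) (ha : a = {r : R | ∃ s ∈ S, s * r = 0})
    (T : Set R) (hT : T = {x : R | ∃ s ∈ S, ∃ y ∈ a, x = s + y}) :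
    (1 : R) ∈ T ∧ (∀ u ∈ T, ∀ v ∈ T, u * v ∈ T) ∧ (0 : R) ∉ T ∧
    (∀ r : R, ∀ s ∈ T, ∃ s' ∈ T, ∃ r' : R, s' * r = r' * s) ∧
    (∀ r : R, ∀ s ∈ T, r * s = 0 → ∃ t ∈ T, t * r = 0) ∧
    {r : R | ∃ s ∈ T, s * r = 0} = a := by
  subst ha hT
  have hST : S ⊆ addLeftAss S := subset_addLeftAss hone
  have hdom : ∀ t ∈ addLeftAss S, ∃ p ∈ S, p * t ∈ S :=
    fun _ => exists_mul_mem_of_mem_addLeftAss hmul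
  exact ⟨hST hone, mul_mem_addLeftAss hmul hOre,
    zero_notMem_of_forall_exists_mul_mem hzero hdom,
    ore_of_forall_exists_mul_mem hOre hST hdom,
    exists_mul_eq_zero_of_mul_addLeftAss_eq_zero hone hmul hOre hden,
    (leftAss_subset_of_forall_exists_mul_mem hdom).antisymm (leftAss_mono hST)⟩
end
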